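/- arXiv:1908.05476 — 3 statements merged into one kernel-verified Lean document; each statement's English description precedes it below -/
import Mathlib

section
/- Let V : [0,1] → ℝ be continuously differentiable with V'(0) > 0, and let B_n(α) = V(α) - ∫₀^α (t/α)^(n-1) V'(t) dt. Then as α → 0⁺, B_n(α) = V(0) + ((n-1)/n) V'(0) α + o(α); in particular B_n(0⁺) = V(0) and the right derivative of B_n at 0 equals ((n-1)/n) V'(0). -/
open intervalIntegral Asymptotics

theorem stmt4 (V V' B : ℝ → ℝ) (n : ℕ) (hn : 2 ≤ n)
    (hV : ∀ t, HasDerivAt V (V' t) t) (hV'cont : Continuous V')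
    (hV'0 : 0 < V' 0)
    (hB : ∀ α, B α = V α - ∫ t in (0:ℝ)..α, (t / α) ^ (n - 1) * V' t) :
    ((fun α => B α - (V 0 + ((n:ℝ) - 1) / n * V' 0 * α))
        =o[nhdsWithin 0 (Set.Ioi 0)] (fun α => α)) ∧
    Filter.Tendsto B (nhdsWithin 0 (Set.Ioi 0)) (nhds (V 0)) ∧
    HasDerivWithinAt B (((n:ℝ) - 1) / n * V' 0) (Set.Ici 0) 0 := by
  obtain ⟨m, rfl⟩ : ∃ m, n = m + 1 := ⟨n - 1, by omega⟩
  have hm : (1:ℕ) ≤ m := by omega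
  have hncast : ((m:ℝ) + 1) ≠ 0 := by positivity
  have hB0 : B 0 = V 0 := by simp [hB]
  -- h1 : o-expansion of V at 0
  have h1 : (fun α : ℝ => V α - V 0 - α * V' 0) =o[nhdsWithin 0 (Set.Ioi 0)]
      (fun α => α) := by
    have := (hasDerivAt_iff_isLittleO.mp (hV 0)).mono
      (nhdsWithin_le_nhds (s := Set.Ioi (0:ℝ)))
    simpa [smul_eq_mul, mul_comm] using this
  -- h2 : o-expansion of the integral term
  have h2 : (fun α : ℝ => (∫ t in (0:ℝ)..α, (t / α) ^ m * V' t)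
      - α / (m + 1) * V' 0) =o[nhdsWithin 0 (Set.Ioi 0)] (fun α => α) := by
    rw [isLittleO_iff]
    intro ε hε
    obtain ⟨δ, hδ, hδε⟩ := Metric.continuousAt_iff.mp (hV'cont.continuousAt (x := 0)) ε hε
    filter_upwards [Ioo_mem_nhdsGT hδ] with α hα
    obtain ⟨hα0, hαδ⟩ := hα
    have hαne : α ≠ 0 := ne_of_gt hα0
    have hi1 : IntervalIntegrable (fun t => (t / α) ^ m * V' t) MeasureTheory.volume 0 α :=
      (Continuous.mul (by continuity) hV'cont).intervalIntegrable _ _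
    have hi2 : IntervalIntegrable (fun t => (t / α) ^ m * V' 0) MeasureTheory.volume 0 α :=
      (Continuous.mul (by continuity) continuous_const).intervalIntegrable _ _
    have hint : (∫ t in (0:ℝ)..α, (t / α) ^ m * V' 0) = α / (m + 1) * V' 0 := by
      simp_rw [div_pow, div_mul_eq_mul_div, intervalIntegral.integral_div,
        intervalIntegral.integral_mul_const, integral_pow]
      field_simp
      ring
    have hsub : (∫ t in (0:ℝ)..α, (t / α) ^ m * V' t) - α / (m + 1) * V' 0
        = ∫ t in (0:ℝ)..α, (t / α) ^ m * (V' t - V' 0) := by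
      rw [← hint, ← intervalIntegral.integral_sub hi1 hi2]
      congr 1
      ext t
      ring
    rw [hsub]
    have hbound : ∀ t ∈ Set.uIoc (0:ℝ) α, ‖(t / α) ^ m * (V' t - V' 0)‖ ≤ ε := by
      intro t ht
      rw [Set.uIoc_of_le hα0.le] at ht
      obtain ⟨ht0, htα⟩ := ht
      have h1' : |(t / α) ^ m| ≤ 1 := by
        rw [abs_pow]
        apply pow_le_one₀ (abs_nonneg _)
        rw [abs_div, abs_of_pos ht0, abs_of_pos hα0]
        exact div_le_one_of_le₀ htα hα0.le
      have h2' : |V' t - V' 0| ≤ ε := by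
        have := hδε (x := t) (by
          simp only [Real.dist_eq, sub_zero]
          rw [abs_of_pos ht0]; exact lt_of_le_of_lt htα hαδ)
        rw [Real.dist_eq] at this
        exact this.le
      calc ‖(t / α) ^ m * (V' t - V' 0)‖ = |(t / α) ^ m| * |V' t - V' 0| := abs_mul _ _
        _ ≤ 1 * ε := mul_le_mul h1' h2' (abs_nonneg _) zero_le_one
        _ = ε := one_mul ε
    calc ‖∫ t in (0:ℝ)..α, (t / α) ^ m * (V' t - V' 0)‖
        ≤ ε * |α - 0| := intervalIntegral.norm_integral_le_of_norm_le_const hbound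
      _ = ε * ‖α‖ := by rw [sub_zero]; rfl
  -- combine
  have hmain : (fun α => B α - (V 0 + ((m:ℝ) + 1 - 1) / ((m:ℝ) + 1) * V' 0 * α))
      =o[nhdsWithin 0 (Set.Ioi 0)] (fun α : ℝ => α) := by
    refine (h1.sub h2).congr (fun α => ?_) (fun _ => rfl)
    rw [hB]
    have : (m + 1 : ℕ) - 1 = m := by omega
    rw [this]
    field_simp
    ring
  have hmain' : (fun α => B α - (V 0 + (((m+1:ℕ):ℝ) - 1) / ((m+1:ℕ):ℝ) * V' 0 * α))
      =o[nhdsWithin 0 (Set.Ioi 0)] (fun α : ℝ => α) := by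
    simpa using hmain
  refine ⟨hmain', ?_, ?_⟩
  · -- tendsto
    have hz : Filter.Tendsto (fun α : ℝ => α) (nhdsWithin 0 (Set.Ioi 0)) (nhds 0) :=
      Filter.Tendsto.mono_left Filter.tendsto_id nhdsWithin_le_nhds
    have h0 := hmain'.tendsto_div_nhds_zero
    have ht0 : Filter.Tendsto (fun α => B α - (V 0 + (((m+1:ℕ):ℝ) - 1) / ((m+1:ℕ):ℝ) * V' 0 * α))
        (nhdsWithin 0 (Set.Ioi 0)) (nhds 0) := hmain'.tendsto_zero_of_tendsto hz
    have hlin : Filter.Tendsto (fun α : ℝ => V 0 + (((m+1:ℕ):ℝ) - 1) / ((m+1:ℕ):ℝ) * V' 0 * α)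
        (nhdsWithin 0 (Set.Ioi 0)) (nhds (V 0)) := by
      have : Filter.Tendsto (fun α : ℝ => V 0 + (((m+1:ℕ):ℝ) - 1) / ((m+1:ℕ):ℝ) * V' 0 * α)
          (nhds 0) (nhds (V 0 + (((m+1:ℕ):ℝ) - 1) / ((m+1:ℕ):ℝ) * V' 0 * 0)) :=
        (continuous_const.add (continuous_const.mul continuous_id)).tendsto 0
      simpa using this.mono_left nhdsWithin_le_nhds
    have := ht0.add hlin
    simpa using this
  · -- derivative
    rw [hasDerivWithinAt_iff_isLittleO]
    have hins : Set.Ici (0:ℝ) = insert 0 (Set.Ioi 0) := Set.Ioi_insert.symm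
    rw [hins, nhdsWithin_insert, isLittleO_sup]
    constructor
    · rw [isLittleO_pure]
      simp
    · refine hmain'.congr (fun α => ?_) (fun α => by simp)
      rw [hB0]
      simp [smul_eq_mul]
      ring
end

section
/- Under the setting of the previous mixture with g_n(b̄_n) = 1/((n-1)(v̄ - b̄_n)) where v̄ > b̄_{n̄}, the jump sizes Δ_n = n p_n / ((n-1)(v̄ - b̄_n)) together with Σ p_n = 1 determine v̄ uniquely as v̄ = (1 + Σ_n ((n-1)/n) Δ_n b̄_n) / (Σ_n ((n-1)/n) Δ_n). -/
open Finset

/-- With `c i = p i / (v - b i)`, summing `c i * (v - b i) = p i` gives the linear equation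
`v * ∑ c i - ∑ c i * b i = 1` for `v`, and `∑ c i > 0`. -/
theorem eq_one_add_sum_mul_div_sum_of_sum_eq_one {ι : Type*} (s : Finset ι) (p b : ι → ℝ) (v : ℝ)
    (hp : ∀ i ∈ s, 0 < p i) (hsum : ∑ i ∈ s, p i = 1) (hv : ∀ i ∈ s, b i < v) :
    v = (1 + ∑ i ∈ s, p i / (v - b i) * b i) / ∑ i ∈ s, p i / (v - b i) := by
  have hs : s.Nonempty := nonempty_of_sum_ne_zero (hsum ▸ one_ne_zero)
  have hpos : 0 < ∑ i ∈ s, p i / (v - b i) :=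
    sum_pos (fun i hi => div_pos (hp i hi) (sub_pos.2 (hv i hi))) hs
  have hone : ∑ i ∈ s, p i / (v - b i) * (v - b i) = 1 := by
    rw [sum_congr rfl fun i hi => div_mul_cancel₀ (p i) (sub_ne_zero.2 (hv i hi).ne'), hsum]
  rw [eq_div_iff hpos.ne', ← hone]
  simp only [mul_sub, sum_sub_distrib, ← sum_mul]
  ring

theorem sub_one_div_mul_eq_div {n p d : ℝ} (hn : 1 < n) :
    (n - 1) / n * (n * p / ((n - 1) * d)) = p / d := by
  have hn0 : n ≠ 0 := by positivity
  have hn1 : n - 1 ≠ 0 := by linarith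
  field_simp

theorem stmt7_general (nlo nhi : ℕ) (hlo : 2 ≤ nlo)
    (p Δ bb : ℕ → ℝ) (vbar : ℝ)
    (hp : ∀ n ∈ Finset.Icc nlo nhi, 0 < p n)
    (hsum : ∑ n ∈ Finset.Icc nlo nhi, p n = 1)
    (hv : ∀ n ∈ Finset.Icc nlo nhi, bb n < vbar)
    (hΔ : ∀ n ∈ Finset.Icc nlo nhi,
      Δ n = (n : ℝ) * p n / (((n:ℝ) - 1) * (vbar - bb n))) :
    vbar = (1 + ∑ n ∈ Finset.Icc nlo nhi, ((n:ℝ) - 1) / n * Δ n * bb n)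
           / (∑ n ∈ Finset.Icc nlo nhi, ((n:ℝ) - 1) / n * Δ n) := by
  have hweight : ∀ n ∈ Icc nlo nhi, ((n : ℝ) - 1) / n * Δ n = p n / (vbar - bb n) := by
    intro n hn
    have h1n : (1 : ℝ) < n := by
      have := (mem_Icc.1 hn).1
      exact_mod_cast (by omega : 1 < n)
    rw [hΔ n hn, sub_one_div_mul_eq_div h1n]
  rw [sum_congr rfl hweight, sum_congr rfl fun n hn => by rw [hweight n hn]]
  exact eq_one_add_sum_mul_div_sum_of_sum_eq_one _ p bb vbar hp hsum hv

theorem stmt7 (nlo nhi : ℕ) (hlo : 2 ≤ nlo) (hle : nlo ≤ nhi)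
    (p Δ bb : ℕ → ℝ) (vbar : ℝ)
    (hp : ∀ n ∈ Finset.Icc nlo nhi, 0 < p n)
    (hsum : ∑ n ∈ Finset.Icc nlo nhi, p n = 1)
    (hv : ∀ n ∈ Finset.Icc nlo nhi, bb n < vbar)
    (hΔ : ∀ n ∈ Finset.Icc nlo nhi,
      Δ n = (n : ℝ) * p n / (((n:ℝ) - 1) * (vbar - bb n))) :
    vbar = (1 + ∑ n ∈ Finset.Icc nlo nhi, ((n:ℝ) - 1) / n * Δ n * bb n)
           / (∑ n ∈ Finset.Icc nlo nhi, ((n:ℝ) - 1) / n * Δ n) :=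
  stmt7_general nlo nhi hlo p Δ bb vbar hp hsum hv hΔ
end

section
/- Let g_n, n = n̲,…,n̄, be continuous bid densities on their supports with g_n(v̲) > 0 for each n, p_n > 0 with Σ p_n = 1, and G(b) = Σ_n p_n (∫_{v̲}^b g_n)^n. Then lim_{t↓0} log G(v̲ + t)/log t = n̲. -/
/-!
Each `∫_{v̲}^{v̲+t} g_n` behaves like `g_n(v̲) t` as `t ↓ 0`, so the `n`-th term of `G(v̲ + t)` is
of order `t ^ n` and the term with the smallest exponent `n̲` dominates:
`G(v̲ + t) / t ^ n̲ → p_{n̲} g_{n̲}(v̲) ^ n̲ > 0`. Taking logarithms,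
`log G(v̲ + t) = n̲ log t + O(1)`, and dividing by `log t → -∞` gives the limit `n̲`.
-/

open Filter Topology intervalIntegral

theorem Continuous.tendsto_integral_add_div {g : ℝ → ℝ} (hg : Continuous g) (a : ℝ) :
    Tendsto (fun t => (∫ s in a..a + t, g s) / t) (𝓝[≠] 0) (𝓝 (g a)) := by
  have hderiv := hasDerivAt_iff_tendsto_slope_zero.1 (hg.integral_hasStrictDerivAt a a).hasDerivAt
  simpa [div_eq_inv_mul] using hderiv

theorem tendsto_sum_mul_pow_div_pow {s : Finset ℕ} {k : ℕ} (hk : k ∈ s) (hmin : ∀ n ∈ s, k ≤ n)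
    (p : ℕ → ℝ) {u : ℕ → ℝ → ℝ} {L : ℕ → ℝ}
    (hu : ∀ n ∈ s, Tendsto (fun t => u n t / t) (𝓝[≠] 0) (𝓝 (L n))) :
    Tendsto (fun t => (∑ n ∈ s, p n * u n t ^ n) / t ^ k) (𝓝[≠] 0) (𝓝 (p k * L k ^ k)) := by
  have hterm : ∀ n ∈ s, Tendsto (fun t => p n * (u n t / t) ^ n * t ^ (n - k)) (𝓝[≠] 0)
      (𝓝 (p n * L n ^ n * 0 ^ (n - k))) := fun n hn =>
    ((hu n hn).pow n).const_mul (p n) |>.mul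
      ((continuous_pow (n - k)).tendsto' 0 _ rfl |>.mono_left nhdsWithin_le_nhds)
  have hlim : ∑ n ∈ s, p n * L n ^ n * (0 : ℝ) ^ (n - k) = p k * L k ^ k := by
    rw [Finset.sum_eq_single_of_mem k hk]
    · simp
    · intro n hn hne
      simp [Nat.sub_ne_zero_of_lt ((hmin n hn).lt_of_ne' hne)]
  rw [← hlim]
  refine (tendsto_finsetSum s hterm).congr' ?_
  filter_upwards [self_mem_nhdsWithin] with t (ht : t ≠ 0)
  rw [Finset.sum_div]
  refine Finset.sum_congr rfl fun n hn => ?_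
  rw [div_pow, pow_sub₀ t ht (hmin n hn)]
  field_simp

theorem tendsto_log_div_log_of_tendsto_div_pow {f : ℝ → ℝ} {k : ℕ} {c : ℝ} (hc : 0 < c)
    (hf : Tendsto (fun t => f t / t ^ k) (𝓝[>] 0) (𝓝 c)) :
    Tendsto (fun t => Real.log (f t) / Real.log t) (𝓝[>] 0) (𝓝 k) := by
  have hrem : Tendsto (fun t => Real.log (f t / t ^ k) / Real.log t) (𝓝[>] 0) (𝓝 0) :=
    ((Real.continuousAt_log hc.ne').tendsto.comp hf).div_atBot Real.tendsto_log_nhdsGT_zero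
  rw [← zero_add (k : ℝ)]
  refine (hrem.add_const (k : ℝ)).congr' ?_
  filter_upwards [hf.eventually (eventually_gt_nhds hc),
    Ioo_mem_nhdsGT (zero_lt_one' ℝ)] with t hpos ⟨ht0, ht1⟩
  have hlog : Real.log t ≠ 0 := (Real.log_neg ht0 ht1).ne
  have htk : t ^ k ≠ 0 := pow_ne_zero k ht0.ne'
  have hft : 0 < f t := by simpa [htk] using mul_pos hpos (pow_pos ht0 k)
  rw [Real.log_div hft.ne' htk, Real.log_pow]
  field_simp
  ring

theorem stmt8_general (nlo nhi : ℕ) (hle : nlo ≤ nhi)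
    (p : ℕ → ℝ) (hp : ∀ n ∈ Finset.Icc nlo nhi, 0 < p n)
    (vlo : ℝ) (gd : ℕ → ℝ → ℝ) (G : ℝ → ℝ)
    (hcont : ∀ n ∈ Finset.Icc nlo nhi, Continuous (gd n))
    (hpos : ∀ n ∈ Finset.Icc nlo nhi, 0 < gd n vlo)
    (hG : ∀ b, G b = ∑ n ∈ Finset.Icc nlo nhi, p n * (∫ t in vlo..b, gd n t) ^ n) :
    Filter.Tendsto (fun t => Real.log (G (vlo + t)) / Real.log t)
      (nhdsWithin 0 (Set.Ioi 0)) (nhds (nlo : ℝ)) := by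
  have hmem : nlo ∈ Finset.Icc nlo nhi := Finset.mem_Icc.2 ⟨le_rfl, hle⟩
  have hratio : Tendsto (fun t => G (vlo + t) / t ^ nlo) (𝓝[>] 0)
      (𝓝 (p nlo * gd nlo vlo ^ nlo)) := by
    simp_rw [hG]
    exact (tendsto_sum_mul_pow_div_pow hmem (fun n hn => (Finset.mem_Icc.1 hn).1) p
      fun n hn => (hcont n hn).tendsto_integral_add_div vlo).mono_left (nhdsGT_le_nhdsNE 0)
  exact tendsto_log_div_log_of_tendsto_div_pow
    (mul_pos (hp nlo hmem) (pow_pos (hpos nlo hmem) nlo)) hratio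

theorem stmt8 (nlo nhi : ℕ) (hlo : 2 ≤ nlo) (hle : nlo ≤ nhi)
    (p : ℕ → ℝ) (hp : ∀ n ∈ Finset.Icc nlo nhi, 0 < p n)
    (hsum : ∑ n ∈ Finset.Icc nlo nhi, p n = 1)
    (vlo : ℝ) (gd : ℕ → ℝ → ℝ) (G : ℝ → ℝ)
    (hcont : ∀ n ∈ Finset.Icc nlo nhi, Continuous (gd n))
    (hnonneg : ∀ n ∈ Finset.Icc nlo nhi, ∀ b, 0 ≤ gd n b)
    (hpos : ∀ n ∈ Finset.Icc nlo nhi, 0 < gd n vlo)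
    (hG : ∀ b, G b = ∑ n ∈ Finset.Icc nlo nhi, p n * (∫ t in vlo..b, gd n t) ^ n) :
    Filter.Tendsto (fun t => Real.log (G (vlo + t)) / Real.log t)
      (nhdsWithin 0 (Set.Ioi 0)) (nhds (nlo : ℝ)) :=
  stmt8_general nlo nhi hle p hp vlo gd G hcont hpos hG
end
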